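/- Let F₁,…,F_m be nonempty compact convex sets of density matrices, F = conv(∪_k F_k), and for each k let Rmax_k and Rmin_k denote the generalized robustness (dual form) and reciprocal-overlap measures relative to F_k, and Rmax, Rmin those relative to F. Assume for each k and all pure states ψ that Rmax_k(ψ) ≥ Rmin_k(ψ), and suppose the pure state φ maximizes Rmin_{k*} where k* = argmin_k Rmin_k(φ), and that Rmax_{k*}(φ) = Rmin_{k*}(φ). Then Rmax(φ) = min_k Rmax_k(φ) = Rmin(φ), and φ maximizes Rmin over pure states. -/

import Mathlib

open Matrix
open scoped ComplexOrder

/-- Hilbert–Schmidt inner product (real part of Tr(A B)) on matrices. -/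
noncomputable def ip {n : Type*} [Fintype n] (A B : Matrix n n ℂ) : ℝ := ((A * B).trace).re

/-- A density matrix: positive semidefinite with trace one. -/
def IsDensity {n : Type*} [Fintype n] (ρ : Matrix n n ℂ) : Prop := ρ.PosSemidef ∧ ρ.trace = 1

/-- A pure state: a rank-one (trace-one) projection. -/
def IsPure {n : Type*} [Fintype n] (P : Matrix n n ℂ) : Prop := IsDensity P ∧ P * P = P

/-- Generalized robustness, dual form. -/
noncomputable def Rmax {n : Type*} [Fintype n] (F : Set (Matrix n n ℂ)) (ρ : Matrix n n ℂ) : ℝ :=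
  sSup {x : ℝ | ∃ W : Matrix n n ℂ, W.PosSemidef ∧ (∀ σ ∈ F, ip W σ ≤ 1) ∧ x = ip ρ W}

/-- Maximal overlap with the free set. -/
noncomputable def RminInv {n : Type*} [Fintype n] (F : Set (Matrix n n ℂ)) (φ : Matrix n n ℂ) : ℝ :=
  sSup {x : ℝ | ∃ σ ∈ F, x = ip φ σ}

/-- Rmin: reciprocal of maximal overlap with the free set. -/
noncomputable def Rmin {n : Type*} [Fintype n] (F : Set (Matrix n n ℂ)) (φ : Matrix n n ℂ) : ℝ :=
  1 / RminInv F φ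

/-!
Let `c` be the largest overlap `ip φ σ` over `σ ∈ F k*`. Since `k*` minimizes `Rmin_k(φ)`, every
`F k` has overlap at most `c` with `φ`; overlap with `φ` is linear in `σ`, so the bound persists on
the hull `conv ⋃ F k`, whose `Rmin` at `φ` is therefore `1 / c`. Since `φ` maximizes `Rmin_{k*}`,
every pure state has overlap at least `c` with `F k*`, hence with the hull, so `φ` also maximizes
the hull's `Rmin`. Finally the hull contains `F k*`, so its `Rmax` at `φ` is at most
`Rmax_{k*}(φ) = 1 / c`, and `W = φ / c` is a feasible witness for the hull with value `1 / c`.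
-/

section InnerProduct

variable {n : Type*} [Fintype n]

lemma ip_comm (A B : Matrix n n ℂ) : ip A B = ip B A := by
  rw [ip, ip, trace_mul_comm]

lemma isLinearMap_ip (A : Matrix n n ℂ) : IsLinearMap ℝ (ip A) where
  map_add B C := by simp only [ip, Matrix.mul_add, trace_add, Complex.add_re]
  map_smul r B := by simp only [ip, Matrix.mul_smul, trace_smul, Complex.smul_re]

lemma ip_smul_right (A B : Matrix n n ℂ) (r : ℝ) : ip A (r • B) = r * ip A B :=
  (isLinearMap_ip A).map_smul r B

lemma ip_smul_left (A B : Matrix n n ℂ) (r : ℝ) : ip (r • A) B = r * ip A B := by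
  rw [ip_comm, ip_smul_right, ip_comm]

lemma ip_le_of_mem_convexHull {A : Matrix n n ℂ} {S : Set (Matrix n n ℂ)} {c : ℝ}
    (h : ∀ σ ∈ S, ip A σ ≤ c) : ∀ σ ∈ convexHull ℝ S, ip A σ ≤ c :=
  fun _ hσ => convexHull_min h (convex_halfSpace_le (isLinearMap_ip A) c) hσ

lemma ip_nonneg {A B : Matrix n n ℂ} (hA : A.PosSemidef) (hB : B.PosSemidef) : 0 ≤ ip A B := by
  classical
  open scoped MatrixOrder in
  obtain ⟨C, rfl⟩ := CStarAlgebra.nonneg_iff_eq_star_mul_self.mp hA.nonneg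
  have h := (hB.mul_mul_conjTranspose_same C).trace_nonneg
  rw [ip, star_eq_conjTranspose, Matrix.mul_assoc, trace_mul_comm]
  exact (Complex.nonneg_iff.mp h).1

lemma ip_self_of_isPure {P : Matrix n n ℂ} (hP : IsPure P) : ip P P = 1 := by
  rw [ip, hP.2, hP.1.2, Complex.one_re]

lemma posSemidef_of_isHermitian_of_mul_self {Q : Matrix n n ℂ} (hQ : Q.IsHermitian)
    (hQQ : Q * Q = Q) : Q.PosSemidef := by
  simpa only [hQ.eq, hQQ] using posSemidef_conjTranspose_mul_self Q

lemma ip_le_one [DecidableEq n] {P σ : Matrix n n ℂ} (hP : IsPure P) (hσ : IsDensity σ) :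
    ip P σ ≤ 1 := by
  have hQ : (1 - P).PosSemidef := by
    refine posSemidef_of_isHermitian_of_mul_self ?_ ?_
    · simp only [IsHermitian, conjTranspose_sub, conjTranspose_one, hP.1.1.1.eq]
    · rw [sub_mul, one_mul, mul_sub, mul_one, hP.2, sub_self, sub_zero]
  have h := ip_nonneg hQ hσ.1
  rw [ip, sub_mul, one_mul, trace_sub, Complex.sub_re, hσ.2, Complex.one_re] at h
  rw [ip]
  linarith

lemma convex_setOf_isDensity : Convex ℝ {σ : Matrix n n ℂ | IsDensity σ} := by
  intro x hx y hy a b ha hb hab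
  refine ⟨(hx.1.smul ha).add (hy.1.smul hb), ?_⟩
  rw [trace_add, trace_smul, trace_smul, hx.2, hy.2, ← add_smul, hab, one_smul]

end InnerProduct

section PureStates

variable {n : Type*} [Fintype n]

lemma ip_vecMulVec (v : n → ℂ) (σ : Matrix n n ℂ) :
    ip (vecMulVec v (star v)) σ = (star v ⬝ᵥ σ *ᵥ v).re := by
  rw [ip, vecMulVec_mul, trace_vecMulVec, dotProduct_comm, dotProduct_mulVec]

lemma isPure_vecMulVec {v : n → ℂ} (hv : star v ⬝ᵥ v = 1) : IsPure (vecMulVec v (star v)) := by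
  refine ⟨⟨posSemidef_vecMulVec_self_star v, ?_⟩, ?_⟩
  · rw [trace_vecMulVec, dotProduct_comm, hv]
  · rw [vecMulVec_mul_vecMulVec, hv, one_smul]

lemma exists_unit_vecMulVec_eq {u : n → ℂ} {c : ℝ} (hc : 0 < c) (hu : star u ⬝ᵥ u = c) :
    ∃ v : n → ℂ, star v ⬝ᵥ v = 1 ∧ vecMulVec v (star v) = c⁻¹ • vecMulVec u (star u) := by
  set b : ℂ := (((√c)⁻¹ : ℝ) : ℂ)
  have hb : star b * b = (c⁻¹ : ℝ) := by
    rw [Complex.star_def, Complex.conj_ofReal, ← Complex.ofReal_mul, ← mul_inv,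
      Real.mul_self_sqrt hc.le]
  refine ⟨b • u, ?_, ?_⟩
  · rw [star_smul, smul_dotProduct, dotProduct_smul, smul_smul, smul_eq_mul, hb, hu,
      ← Complex.ofReal_mul, inv_mul_cancel₀ hc.ne', Complex.ofReal_one]
  · rw [star_smul, smul_vecMulVec, vecMulVec_smul, smul_smul, mul_comm, hb, Complex.coe_smul]

lemma IsPure.exists_eq_vecMulVec [DecidableEq n] {P : Matrix n n ℂ} (hP : IsPure P) :
    ∃ v : n → ℂ, star v ⬝ᵥ v = 1 ∧ P = vecMulVec v (star v) := by
  obtain ⟨⟨hpsd, htr⟩, hidem⟩ := hP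
  have hherm : Pᴴ = P := hpsd.1.eq
  obtain ⟨j, -, hj⟩ : ∃ j ∈ Finset.univ, P j j ≠ 0 :=
    Finset.exists_ne_zero_of_sum_ne_zero (show P.trace ≠ 0 from htr ▸ one_ne_zero)
  obtain ⟨hcpos, him⟩ := Complex.pos_iff.mp (lt_of_le_of_ne hpsd.diag_nonneg hj.symm)
  set c : ℝ := (P j j).re
  have hc : P j j = c := Complex.ext rfl (by rw [Complex.ofReal_im, ← him])
  -- With `u` the `j`-th column of `P`, `P - c⁻¹ • u u*` is a projection of trace zero.
  set u := P *ᵥ Pi.single j 1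
  have hPu : P *ᵥ u = u := by rw [mulVec_mulVec, hidem]
  have huP : star u ᵥ* P = star u := by
    conv_lhs => rw [← hherm]
    rw [← star_mulVec, hPu]
  have hu : star u ⬝ᵥ u = c := by
    rw [dotProduct_mulVec, huP, dotProduct_single, mul_one, Pi.star_apply]
    simp only [u, mulVec_single_one, col_apply, hc, Complex.star_def, Complex.conj_ofReal]
  set M := vecMulVec u (star u)
  have hPM : P * M = M := by rw [mul_vecMulVec, hPu]
  have hMP : M * P = M := by rw [vecMulVec_mul, huP]
  have hMM : M * M = c • M := by
    rw [vecMulVec_mul_vecMulVec, hu, vecMulVec_smul, Complex.coe_smul]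
  set Q := P - c⁻¹ • M
  have hQ : Q.IsHermitian := by
    simp only [Q, M, IsHermitian, conjTranspose_sub, conjTranspose_smul, conjTranspose_vecMulVec,
      star_star, hherm, star_trivial]
  have hQQ : Q * Q = Q := by
    simp only [Q, sub_mul, mul_sub, Matrix.smul_mul, Matrix.mul_smul, hidem, hPM, hMP, hMM,
      smul_smul]
    match_scalars
    · rfl
    · field_simp
      ring
  have hQ0 : Q = 0 := by
    rw [← (posSemidef_of_isHermitian_of_mul_self hQ hQQ).trace_eq_zero_iff, trace_sub, trace_smul,
      htr, trace_vecMulVec, dotProduct_comm, hu, Complex.real_smul, Complex.ofReal_inv,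
      inv_mul_cancel₀ (Complex.ofReal_ne_zero.mpr hcpos.ne'), sub_self]
  obtain ⟨v, hv, hvM⟩ := exists_unit_vecMulVec_eq hcpos hu
  exact ⟨v, hv, hvM ▸ sub_eq_zero.mp hQ0⟩

lemma exists_isPure_ip_pos [DecidableEq n] {σ : Matrix n n ℂ} (hσ : IsDensity σ) :
    ∃ ψ : Matrix n n ℂ, IsPure ψ ∧ 0 < ip ψ σ := by
  have hsum : ∑ i, (σ i i).re = 1 := by
    simpa [trace, Complex.re_sum] using congrArg Complex.re hσ.2
  obtain ⟨i, -, hi⟩ := Finset.exists_lt_of_sum_lt (s := Finset.univ) (f := fun _ => (0 : ℝ))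
    (g := fun i => (σ i i).re) (by simp [hsum])
  refine ⟨_, isPure_vecMulVec (v := Pi.single i 1) ?_, ?_⟩
  · simp
  · rw [ip_vecMulVec]
    simpa using hi

lemma mulVec_eq_zero_of_ip_vecMulVec_eq_zero {u : n → ℂ} {σ : Matrix n n ℂ} (hσ : σ.PosSemidef)
    (h : ip (vecMulVec u (star u)) σ = 0) : σ *ᵥ u = 0 := by
  rw [ip_vecMulVec] at h
  refine (hσ.dotProduct_mulVec_zero_iff u).mp (Complex.ext h ?_)
  exact (Complex.nonneg_iff.mp (hσ.dotProduct_mulVec_nonneg u)).2.symm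

lemma exists_dotProduct_self_gt_one {u v : n → ℂ} (hu : star u ⬝ᵥ u = 1)
    (hv : star v ⬝ᵥ v = 1) :
    ∃ (w : n → ℂ) (r : ℝ), 1 < r ∧ star w ⬝ᵥ w = r ∧
      ∀ σ : Matrix n n ℂ, σ.IsHermitian → σ *ᵥ u = 0 →
        star w ⬝ᵥ σ *ᵥ w = star v ⬝ᵥ σ *ᵥ v := by
  set a := (star u ⬝ᵥ v).re
  obtain ⟨t, ht, hta⟩ : ∃ t : ℝ, t * t = 1 ∧ 0 ≤ t * a := by
    rcases le_total 0 a with h | h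
    · exact ⟨1, by norm_num, by linarith⟩
    · exact ⟨-1, by norm_num, by linarith⟩
  refine ⟨v + (t : ℂ) • u, 2 + 2 * t * a, by linarith, ?_, fun σ hσ hσu => ?_⟩
  · have hvu : star v ⬝ᵥ u = star (star u ⬝ᵥ v) := star_dotProduct v u
    simp only [star_add, star_smul, add_dotProduct, dotProduct_add, smul_dotProduct,
      dotProduct_smul, hu, hv, hvu, Complex.star_def, Complex.conj_ofReal, smul_eq_mul]
    have hz := Complex.add_conj (star u ⬝ᵥ v)
    have htC : (t : ℂ) * t = 1 := by exact_mod_cast ht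
    push_cast at hz ⊢
    linear_combination (t : ℂ) * hz + htC
  · have huσ : star u ᵥ* σ = 0 := by
      rw [← hσ.eq, ← star_mulVec, hσu, star_zero]
    rw [mulVec_add, mulVec_smul, hσu, smul_zero, add_zero, star_add, add_dotProduct,
      star_smul, smul_dotProduct, dotProduct_mulVec (star u), huσ, zero_dotProduct, smul_zero,
      add_zero]

lemma exists_isPure_ip_eq_inv_mul [DecidableEq n] {ψ φ : Matrix n n ℂ} (hψ : IsPure ψ)
    (hφ : IsPure φ) :
    ∃ ψ' : Matrix n n ℂ, IsPure ψ' ∧ ∃ r : ℝ, 1 < r ∧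
      ∀ σ : Matrix n n ℂ, σ.PosSemidef → ip ψ σ = 0 → ip ψ' σ = r⁻¹ * ip φ σ := by
  obtain ⟨u, hu, rfl⟩ := hψ.exists_eq_vecMulVec
  obtain ⟨v, hv, rfl⟩ := hφ.exists_eq_vecMulVec
  obtain ⟨w, r, hr, hw, hwσ⟩ := exists_dotProduct_self_gt_one hu hv
  obtain ⟨w', hw', hw'w⟩ := exists_unit_vecMulVec_eq (by linarith) hw
  refine ⟨_, isPure_vecMulVec hw', r, hr, fun σ hσ hψσ => ?_⟩
  rw [hw'w, ip_smul_left, ip_vecMulVec, ip_vecMulVec,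
    hwσ σ hσ.1 (mulVec_eq_zero_of_ip_vecMulVec_eq_zero hσ hψσ)]

end PureStates

section Overlap

variable {n : Type*} [Fintype n] {G H : Set (Matrix n n ℂ)} {ψ φ : Matrix n n ℂ}

lemma ip_le_RminInv [DecidableEq n] (hG : ∀ σ ∈ G, IsDensity σ) (hψ : IsPure ψ)
    {σ : Matrix n n ℂ} (hσ : σ ∈ G) : ip ψ σ ≤ RminInv G ψ :=
  le_csSup ⟨1, by rintro _ ⟨τ, hτ, rfl⟩; exact ip_le_one hψ (hG τ hτ)⟩ ⟨σ, hσ, rfl⟩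

lemma RminInv_le {c : ℝ} (hne : G.Nonempty) (h : ∀ σ ∈ G, ip ψ σ ≤ c) : RminInv G ψ ≤ c := by
  obtain ⟨σ, hσ⟩ := hne
  exact csSup_le ⟨_, σ, hσ, rfl⟩ (by rintro _ ⟨τ, hτ, rfl⟩; exact h τ hτ)

lemma RminInv_nonneg (hG : ∀ σ ∈ G, IsDensity σ) (hψ : ψ.PosSemidef) : 0 ≤ RminInv G ψ :=
  Real.sSup_nonneg (by rintro _ ⟨σ, hσ, rfl⟩; exact ip_nonneg hψ (hG σ hσ).1)

lemma RminInv_mono [DecidableEq n] (hGH : G ⊆ H) (hH : ∀ σ ∈ H, IsDensity σ) (hne : G.Nonempty)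
    (hψ : IsPure ψ) : RminInv G ψ ≤ RminInv H ψ :=
  RminInv_le hne fun _ hσ => ip_le_RminInv hH hψ (hGH hσ)

open scoped Pointwise in
lemma RminInv_eq_mul {ψ' : Matrix n n ℂ} {t : ℝ} (ht : 0 ≤ t) (h : ∀ σ ∈ G, ip ψ' σ = t * ip ψ σ) :
    RminInv G ψ' = t * RminInv G ψ := by
  have hset : {x | ∃ σ ∈ G, x = ip ψ' σ} = t • {x | ∃ σ ∈ G, x = ip ψ σ} := by
    ext x
    simp only [Set.mem_ofPred_eq, Set.mem_smul_set, smul_eq_mul]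
    constructor
    · rintro ⟨σ, hσ, rfl⟩
      exact ⟨_, ⟨σ, hσ, rfl⟩, (h σ hσ).symm⟩
    · rintro ⟨_, ⟨σ, hσ, rfl⟩, rfl⟩
      exact ⟨σ, hσ, (h σ hσ).symm⟩
  rw [RminInv, hset, Real.sSup_smul_of_nonneg ht, smul_eq_mul, RminInv]

end Overlap

section Maximizer

variable {n : Type*} [Fintype n] [DecidableEq n] {G : Set (Matrix n n ℂ)} {φ : Matrix n n ℂ}

lemma RminInv_pos_of_forall_Rmin_le (hG : ∀ σ ∈ G, IsDensity σ) (hne : G.Nonempty)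
    (hφ : IsPure φ) (hmax : ∀ ψ, IsPure ψ → Rmin G ψ ≤ Rmin G φ) : 0 < RminInv G φ := by
  by_contra h
  have hφ0 : RminInv G φ = 0 := le_antisymm (not_lt.mp h) (RminInv_nonneg hG hφ.1.1)
  obtain ⟨σ, hσ⟩ := hne
  obtain ⟨ψ, hψ, hψσ⟩ := exists_isPure_ip_pos (hG σ hσ)
  have hψpos : 0 < RminInv G ψ := hψσ.trans_le (ip_le_RminInv hG hψ hσ)
  have hle := hmax ψ hψ
  rw [Rmin, Rmin, hφ0, div_zero] at hle
  exact (one_div_pos.mpr hψpos).not_ge hle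

lemma RminInv_le_of_forall_Rmin_le (hG : ∀ σ ∈ G, IsDensity σ) (hne : G.Nonempty)
    (hφ : IsPure φ) (hmax : ∀ ψ, IsPure ψ → Rmin G ψ ≤ Rmin G φ) {ψ : Matrix n n ℂ}
    (hψ : IsPure ψ) : RminInv G φ ≤ RminInv G ψ := by
  have hc := RminInv_pos_of_forall_Rmin_le hG hne hφ hmax
  have hle_of_pos : ∀ ψ, IsPure ψ → 0 < RminInv G ψ → RminInv G φ ≤ RminInv G ψ :=
    fun ψ hψ hpos => le_of_one_div_le_one_div hpos (hmax ψ hψ)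
  rcases (RminInv_nonneg hG hψ.1.1).lt_or_eq with hpos | hzero
  · exact hle_of_pos ψ hψ hpos
  -- `ψ` is orthogonal to `G`: mathematically `Rmin G ψ = ∞`, but here `1 / 0 = 0`. Diluting `φ`
  -- with `ψ` gives a pure state of strictly smaller positive overlap, contradicting maximality.
  exfalso
  have horth : ∀ σ ∈ G, ip ψ σ = 0 := fun σ hσ =>
    le_antisymm (hzero ▸ ip_le_RminInv hG hψ hσ) (ip_nonneg hψ.1.1 (hG σ hσ).1)
  obtain ⟨ψ', hψ', r, hr, hip⟩ := exists_isPure_ip_eq_inv_mul hψ hφ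
  have hψ'G : RminInv G ψ' = r⁻¹ * RminInv G φ :=
    RminInv_eq_mul (by positivity) fun σ hσ => hip σ (hG σ hσ).1 (horth σ hσ)
  have hle := hle_of_pos ψ' hψ' (by rw [hψ'G]; positivity)
  rw [hψ'G] at hle
  have : r⁻¹ < 1 := inv_lt_one_of_one_lt₀ hr
  nlinarith

end Maximizer

section Robustness

variable {n : Type*} [Fintype n] {G H : Set (Matrix n n ℂ)} {ρ : Matrix n n ℂ}

-- `Rmax F ρ` is, by definition, `sSup (dualValues F ρ)`.
def dualValues (F : Set (Matrix n n ℂ)) (ρ : Matrix n n ℂ) : Set ℝ :=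
  {x : ℝ | ∃ W : Matrix n n ℂ, W.PosSemidef ∧ (∀ σ ∈ F, ip W σ ≤ 1) ∧ x = ip ρ W}

lemma dualValues_anti (hGH : G ⊆ H) : dualValues H ρ ⊆ dualValues G ρ :=
  fun _ ⟨W, hW, hWH, hx⟩ => ⟨W, hW, fun σ hσ => hWH σ (hGH hσ), hx⟩

lemma zero_mem_dualValues : (0 : ℝ) ∈ dualValues G ρ :=
  ⟨0, PosSemidef.zero, fun _ _ => by simp [ip], by simp [ip]⟩

lemma bddAbove_dualValues_of_Rmax_pos (h : 0 < Rmax G ρ) : BddAbove (dualValues G ρ) := by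
  by_contra hb
  exact h.ne' (Real.sSup_of_not_bddAbove hb)

lemma Rmax_anti (hGH : G ⊆ H) (hpos : 0 < Rmax G ρ) : Rmax H ρ ≤ Rmax G ρ :=
  csSup_le_csSup (bddAbove_dualValues_of_Rmax_pos hpos) ⟨0, zero_mem_dualValues⟩
    (dualValues_anti hGH)

lemma inv_le_Rmax {φ : Matrix n n ℂ} {c : ℝ} (hφ : IsPure φ) (hc : 0 < c)
    (hG : ∀ σ ∈ G, ip φ σ ≤ c) (hbdd : BddAbove (dualValues G φ)) : c⁻¹ ≤ Rmax G φ := by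
  refine le_csSup hbdd ⟨c⁻¹ • φ, hφ.1.1.smul (inv_nonneg.mpr hc.le), fun σ hσ => ?_, ?_⟩
  · rw [ip_smul_left, ← inv_mul_cancel₀ hc.ne']
    exact mul_le_mul_of_nonneg_left (hG σ hσ) (inv_nonneg.mpr hc.le)
  · rw [ip_smul_right, ip_self_of_isPure hφ, mul_one]

end Robustness

theorem stmt19_general {d m : ℕ} (F : Fin m → Set (Matrix (Fin d) (Fin d) ℂ))
    (hne : ∀ k, (F k).Nonempty)
    (hdens : ∀ k, ∀ σ ∈ F k, IsDensity σ)
    (hRm : ∀ k, ∀ ψ : Matrix (Fin d) (Fin d) ℂ, IsPure ψ → Rmin (F k) ψ ≤ Rmax (F k) ψ)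
    (φ : Matrix (Fin d) (Fin d) ℂ) (hφ : IsPure φ) (kstar : Fin m)
    (hargmin : ∀ k, Rmin (F kstar) φ ≤ Rmin (F k) φ)
    (hmaxim : ∀ ψ : Matrix (Fin d) (Fin d) ℂ, IsPure ψ → Rmin (F kstar) ψ ≤ Rmin (F kstar) φ)
    (heq : Rmax (F kstar) φ = Rmin (F kstar) φ) :
    Rmax (convexHull ℝ (⋃ k, F k)) φ = Rmin (convexHull ℝ (⋃ k, F k)) φ ∧
    (∀ k, Rmax (convexHull ℝ (⋃ k, F k)) φ ≤ Rmax (F k) φ) ∧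
    (∃ k, Rmax (convexHull ℝ (⋃ k, F k)) φ = Rmax (F k) φ) ∧
    (∀ ψ : Matrix (Fin d) (Fin d) ℂ, IsPure ψ →
      Rmin (convexHull ℝ (⋃ k, F k)) ψ ≤ Rmin (convexHull ℝ (⋃ k, F k)) φ) := by
  set hull := convexHull ℝ (⋃ k, F k)
  have hdens_hull : ∀ σ ∈ hull, IsDensity σ := fun _ hσ =>
    convexHull_min (Set.iUnion_subset fun k => hdens k) convex_setOf_isDensity hσ
  have hsub : F kstar ⊆ hull := (Set.subset_iUnion F kstar).trans (subset_convexHull ℝ _)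
  set c := RminInv (F kstar) φ
  have hc : 0 < c := RminInv_pos_of_forall_Rmin_le (hdens kstar) (hne kstar) hφ hmaxim
  have hoverlap : ∀ σ ∈ hull, ip φ σ ≤ c := ip_le_of_mem_convexHull fun σ hσ => by
    obtain ⟨k, hk⟩ := Set.mem_iUnion.mp hσ
    exact (ip_le_RminInv (hdens k) hφ hk).trans (le_of_one_div_le_one_div hc (hargmin k))
  have hRminInv : RminInv hull φ = c :=
    (RminInv_le ((hne kstar).mono hsub) hoverlap).antisymm
      (RminInv_mono hsub hdens_hull (hne kstar) hφ)
  have hpos : 0 < Rmax (F kstar) φ := by rw [heq, Rmin]; positivity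
  have hRmax : Rmax hull φ = Rmin (F kstar) φ :=
    ((Rmax_anti hsub hpos).trans heq.le).antisymm <| by
      rw [Rmin, one_div]
      exact inv_le_Rmax hφ hc hoverlap
        ((bddAbove_dualValues_of_Rmax_pos hpos).mono (dualValues_anti hsub))
  refine ⟨by rw [hRmax, Rmin, Rmin, hRminInv], fun k => ?_, ⟨kstar, hRmax.trans heq.symm⟩,
    fun ψ hψ => ?_⟩
  · exact hRmax.trans_le ((hargmin k).trans (hRm k φ hφ))
  · rw [Rmin, Rmin, hRminInv]
    exact one_div_le_one_div_of_le hc <|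
      (RminInv_le_of_forall_Rmin_le (hdens kstar) (hne kstar) hφ hmaxim hψ).trans
        (RminInv_mono hsub hdens_hull (hne kstar) hψ)

/-- Golden states for genuine multipartite-type resources: if the pure state φ
maximizes Rmin relative to the argmin component k*, and Rmax_{k*}(φ) = Rmin_{k*}(φ),
then Rmax(φ) = min_k Rmax_k(φ) = Rmin(φ) and φ maximizes Rmin over pure states. -/
theorem stmt19 {d m : ℕ} (hm : 0 < m) (F : Fin m → Set (Matrix (Fin d) (Fin d) ℂ))
    (hne : ∀ k, (F k).Nonempty) (hc : ∀ k, IsCompact (F k)) (hcv : ∀ k, Convex ℝ (F k))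
    (hdens : ∀ k, ∀ σ ∈ F k, IsDensity σ)
    (hRm : ∀ k, ∀ ψ : Matrix (Fin d) (Fin d) ℂ, IsPure ψ → Rmin (F k) ψ ≤ Rmax (F k) ψ)
    (φ : Matrix (Fin d) (Fin d) ℂ) (hφ : IsPure φ) (kstar : Fin m)
    (hargmin : ∀ k, Rmin (F kstar) φ ≤ Rmin (F k) φ)
    (hmaxim : ∀ ψ : Matrix (Fin d) (Fin d) ℂ, IsPure ψ → Rmin (F kstar) ψ ≤ Rmin (F kstar) φ)
    (heq : Rmax (F kstar) φ = Rmin (F kstar) φ) :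
    Rmax (convexHull ℝ (⋃ k, F k)) φ = Rmin (convexHull ℝ (⋃ k, F k)) φ ∧
    (∀ k, Rmax (convexHull ℝ (⋃ k, F k)) φ ≤ Rmax (F k) φ) ∧
    (∃ k, Rmax (convexHull ℝ (⋃ k, F k)) φ = Rmax (F k) φ) ∧
    (∀ ψ : Matrix (Fin d) (Fin d) ℂ, IsPure ψ →
      Rmin (convexHull ℝ (⋃ k, F k)) ψ ≤ Rmin (convexHull ℝ (⋃ k, F k)) φ) :=
  stmt19_general F hne hdens hRm φ hφ kstar hargmin hmaxim heq
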